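/- Let B be a generalized Bayesian network. Then for any cutset C of B and any initial distribution γ0 over assignments of C, the Markov chain semantics and the limit average semantics agree: MCS(B, C, γ0) = LimAvg(B, C, γ0); in particular LimAvg(B, C, γ0) is defined for every γ0. -/

import Mathlib

open Filter
open scoped Classical

noncomputable section

namespace GBNPaper

variable {V : Type} [Fintype V] [DecidableEq V]

/-- A distribution over a finite type: nonnegative values summing to one. -/
def IsDist {α : Type} [Fintype α] (μ : α → ℝ) : Prop :=
  (∀ a, 0 ≤ μ a) ∧ ∑ a, μ a = 1

/-- The set of parents of a node `X` w.r.t. an edge set `E`. -/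
def Pre (E : Finset (V × V)) (X : V) : Finset V :=
  (E.filter fun e => e.2 = X).image Prod.fst

/-- The set of initial (parentless) nodes. -/
def InitSet (E : Finset (V × V)) : Finset V :=
  Finset.univ.filter fun X => Pre E X = ∅

/-- Assignments over a subset `U` of the nodes. -/
abbrev Asg (U : Finset V) : Type := {x // x ∈ U} → Bool

/-- A full assignment `b` agrees with a partial assignment `d` on `U`. -/
abbrev Agrees (b : V → Bool) (U : Finset V) (d : Asg U) : Prop :=
  ∀ x : {x // x ∈ U}, b x.1 = d x

/-- A generalized Bayesian network over node set `V`. -/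
structure GBN (V : Type) [Fintype V] [DecidableEq V] where
  /-- the directed edges -/
  edges : Finset (V × V)
  /-- CPT entries: the probability of `X = T` given an assignment of the parents of `X` -/
  cpt : (X : V) → Asg (Pre edges X) → ℝ
  cpt_nonneg : ∀ X b, 0 ≤ cpt X b
  cpt_le_one : ∀ X b, cpt X b ≤ 1
  /-- the initial distribution over assignments of the initial nodes -/
  ι : Asg (InitSet edges) → ℝ
  ι_dist : IsDist ι

/-- Probability of an event (set of full assignments) under `μ`. -/
def probIf (μ : (V → Bool) → ℝ) (p : (V → Bool) → Prop) : ℝ :=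
  ∑ b : V → Bool, if p b then μ b else 0

/-- The marginal distribution of `μ` on `U`. -/
def marginal (μ : (V → Bool) → ℝ) (U : Finset V) : Asg U → ℝ :=
  fun d => probIf μ fun b => Agrees b U d

/-- `Pr(X = v | parents as given by b)`. -/
def copyProb (B : GBN V) (X : V) (v : Bool) (b : V → Bool) : ℝ :=
  if v then B.cpt X (fun p => b p.1) else 1 - B.cpt X (fun p => b p.1)

/-- The standard BN semantics (chain rule) of a GBN. -/
def distBN (B : GBN V) (b : V → Bool) : ℝ :=
  B.ι (fun x => b x.1) *
    ∏ X ∈ Finset.univ \ InitSet B.edges, copyProb B X (b X) b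

/-- The edge set contains no directed cycle. -/
def Acyclic (E : Finset (V × V)) : Prop :=
  ∀ x : V, ¬ Relation.TransGen (fun a b => (a, b) ∈ E) x x

/-- `C` is a cutset: every directed cycle contains a node of `C`. -/
def IsCutset (E : Finset (V × V)) (C : Finset V) : Prop :=
  ∀ x : V, ¬ Relation.TransGen (fun a b => (a, b) ∈ E ∧ a ∉ C ∧ b ∉ C) x x

/-- The standard BN semantics of the `C`-dissected GBN `B↑C↑γ`, as a joint
distribution over assignments of the original nodes `V` together with
assignments of the copies `C'` of the cutset nodes. -/
def distDissect (B : GBN V) (C : Finset V) (γ : Asg C → ℝ)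
    (b : V → Bool) (c : Asg C) : ℝ :=
  B.ι (fun x => b x.1) * γ (fun x => b x.1) *
    (∏ X ∈ (Finset.univ \ InitSet B.edges) \ C, copyProb B X (b X) b) *
    ∏ Y ∈ C.attach, copyProb B Y.1 (c Y) b

/-- `Next(B,C,γ)`: restrict `dist_BN(B↑C↑γ)` to `(V∖C) ∪ C'` and re-identify
the copies with the original cutset nodes. -/
def Next (B : GBN V) (C : Finset V) (γ : Asg C → ℝ) (a : V → Bool) : ℝ :=
  ∑ b : V → Bool,
    if ∀ x : V, x ∉ C → b x = a x then distDissect B C γ b (fun y => a y.1) else 0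

/-- `Extend(B,C,γ) = dist_BN(B↑C↑γ)|_V`. -/
def Extend (B : GBN V) (C : Finset V) (γ : Asg C → ℝ) (a : V → Bool) : ℝ :=
  ∑ c : Asg C, distDissect B C γ a c

/-- Dirac (point) distribution. -/
def DiracD {α : Type} [DecidableEq α] (b : α) : α → ℝ := fun c => if c = b then 1 else 0

/-- Transition matrix of the cutset Markov chain `M_{B↑C}`:
`P(b,c) = Next(B,C,Dirac(b))|_C (c)`. -/
def cutsetP (B : GBN V) (C : Finset V) (b c : Asg C) : ℝ :=
  marginal (Next B C (DiracD b)) C c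

/-- Vector-matrix multiplication `γ·P`. -/
def vecMul {α : Type} [Fintype α] (γ : α → ℝ) (P : α → α → ℝ) : α → ℝ :=
  fun c => ∑ b, γ b * P b c

/-- The transient distributions `γ0·P^n`. -/
def matIter {α : Type} [Fintype α] (P : α → α → ℝ) (γ0 : α → ℝ) : ℕ → (α → ℝ)
  | 0 => γ0
  | n + 1 => vecMul (matIter P γ0 n) P

/-- The sequence `γ_{n+1} = Next(B,C,γ_n)|_C`. -/
def nextSeq (B : GBN V) (C : Finset V) (γ0 : Asg C → ℝ) : ℕ → (Asg C → ℝ)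
  | 0 => γ0
  | n + 1 => marginal (Next B C (nextSeq B C γ0 n)) C

/-- Cesàro averages of a sequence of vectors. -/
def cesaro {α : Type} (f : ℕ → α → ℝ) (n : ℕ) : α → ℝ :=
  fun a => (∑ i ∈ Finset.range (n + 1), f i a) / (n + 1)

/-- The Markov chain semantics `[B]_{MC-C}`: image of
`γ0 ↦ Extend(B,C,lrf^{γ0})` over all initial cutset distributions `γ0`,
where `lrf^{γ0}` is the Cesàro limit of the transient distributions. -/
def MCSem (B : GBN V) (C : Finset V) : Set ((V → Bool) → ℝ) :=
  { μ | ∃ γ0 γ, IsDist γ0 ∧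
      Tendsto (cesaro (matIter (cutsetP B C) γ0)) atTop (nhds γ) ∧
      μ = Extend B C γ }

/-- The limit semantics `[B]_{Lim-C}`. -/
def LimSem (B : GBN V) (C : Finset V) : Set ((V → Bool) → ℝ) :=
  { μ | ∃ γ0 γ, IsDist γ0 ∧
      Tendsto (nextSeq B C γ0) atTop (nhds γ) ∧
      μ = Extend B C γ }

/-- The limit average semantics `[B]_{LimAvg-C}`. -/
def LimAvgSem (B : GBN V) (C : Finset V) : Set ((V → Bool) → ℝ) :=
  { μ | ∃ γ0 γ, IsDist γ0 ∧
      Tendsto (cesaro (nextSeq B C γ0)) atTop (nhds γ) ∧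
      μ = Extend B C γ }

/-- The Markov chain semantics in stationary-distribution form:
`{ Extend(B,C,γ) : γ a distribution with γ = γ·P }`. -/
def MCStatSem (B : GBN V) (C : Finset V) : Set ((V → Bool) → ℝ) :=
  { μ | ∃ γ : Asg C → ℝ, IsDist γ ∧ γ = vecMul γ (cutsetP B C) ∧ μ = Extend B C γ }

/-- Strong CPT-consistency of `μ` for node `X`. -/
def StrongCPT (B : GBN V) (μ : (V → Bool) → ℝ) (X : V) : Prop :=
  ∀ c : Asg (Pre B.edges X),
    probIf μ (fun f => f X = true ∧ Agrees f (Pre B.edges X) c) =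
      probIf μ (fun f => Agrees f (Pre B.edges X) c) * B.cpt X c

/-- Weak CPT-consistency of `μ` for node `X`. -/
def WeakCPT (B : GBN V) (μ : (V → Bool) → ℝ) (X : V) : Prop :=
  probIf μ (fun f => f X = true) =
    ∑ c : Asg (Pre B.edges X),
      probIf μ (fun f => Agrees f (Pre B.edges X) c) * B.cpt X c

/-- The CPT semantics `[B]_{Cpt}`. -/
def CptSem (B : GBN V) : Set ((V → Bool) → ℝ) :=
  { μ | IsDist μ ∧ marginal μ (InitSet B.edges) = B.ι ∧
      ∀ X, X ∉ InitSet B.edges → StrongCPT B μ X }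

/-- `(X ⊥ Y | Z) ∈ Indep(μ)`. -/
def IndepTriple (μ : (V → Bool) → ℝ) (X Y Z : Finset V) : Prop :=
  ∀ (a : Asg X) (b : Asg Y) (c : Asg Z),
    probIf μ (fun f => Agrees f Y b ∧ Agrees f Z c) = 0 ∨
    probIf μ (fun f => Agrees f X a ∧ Agrees f Y b ∧ Agrees f Z c) /
        probIf μ (fun f => Agrees f Y b ∧ Agrees f Z c) =
      probIf μ (fun f => Agrees f X a ∧ Agrees f Z c) /
        probIf μ (fun f => Agrees f Z c)

def PairwiseDisjoint3 (X Y Z : Finset V) : Prop :=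
  Disjoint X Y ∧ Disjoint X Z ∧ Disjoint Y Z

/-- `Indep(μ)` as a set of triples. -/
def IndepSet (μ : (V → Bool) → ℝ) : Set (Finset V × Finset V × Finset V) :=
  { t | PairwiseDisjoint3 t.1 t.2.1 t.2.2 ∧ IndepTriple μ t.1 t.2.1 t.2.2 }

/-- The CPT-I semantics `[B]_{Cpt-I}`. -/
def CptISem (B : GBN V) (I : Set (Finset V × Finset V × Finset V)) :
    Set ((V → Bool) → ℝ) :=
  { μ | μ ∈ CptSem B ∧ I ⊆ IndepSet μ }

/-! d-separation -/

def Adjacent (E : Finset (V × V)) (x y : V) : Prop := (x, y) ∈ E ∨ (y, x) ∈ E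

/-- Reachability along directed edges (including the node itself). -/
def Reaches (E : Finset (V × V)) (x y : V) : Prop :=
  Relation.ReflTransGen (fun a b => (a, b) ∈ E) x y

/-- An intermediate triple `a, w, b` on a path blocks it given `Z`:
either `w ∈ Z` and `w` lies in a chain or a fork, or `w` lies in a collider
and no node reachable from `w` (including `w`) is in `Z`. -/
def BlockedTriple (E : Finset (V × V)) (Z : Finset V) (a w b : V) : Prop :=
  (w ∈ Z ∧ (((a, w) ∈ E ∧ (w, b) ∈ E) ∨ ((b, w) ∈ E ∧ (w, a) ∈ E) ∨
      ((w, a) ∈ E ∧ (w, b) ∈ E))) ∨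
  ((a, w) ∈ E ∧ (b, w) ∈ E ∧ ∀ d, Reaches E w d → d ∉ Z)

/-- A path (as a list of nodes) is blocked given `Z`. -/
def Blocked (E : Finset (V × V)) (Z : Finset V) (W : List V) : Prop :=
  ∃ l₁ a w b l₂, W = l₁ ++ a :: w :: b :: l₂ ∧ BlockedTriple E Z a w b

/-- `x` and `y` are d-separated given `Z`: every undirected simple path
from `x` to `y` is blocked given `Z`. -/
def DSepNodes (E : Finset (V × V)) (x y : V) (Z : Finset V) : Prop :=
  ∀ W : List V, W.Chain' (Adjacent E) → W.Nodup →
    W.head? = some x → W.getLast? = some y → Blocked E Z W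

def DSep (E : Finset (V × V)) (X Y Z : Finset V) : Prop :=
  ∀ x ∈ X, ∀ y ∈ Y, DSepNodes E x y Z

/-- `d-sep(G)` as a set of triples of pairwise disjoint node sets. -/
def DSepSet (E : Finset (V × V)) : Set (Finset V × Finset V × Finset V) :=
  { t | PairwiseDisjoint3 t.1 t.2.1 t.2.2 ∧ DSep E t.1 t.2.1 t.2.2 }

/-- `Close(G)`: add an edge between every ordered pair of distinct initial nodes. -/
def Close (E : Finset (V × V)) : Finset (V × V) :=
  E ∪ ((InitSet E ×ˢ InitSet E).filter fun p => p.1 ≠ p.2)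

/-- `G[C]`: remove all edges into nodes of `C` (so the nodes of `C` are initial). -/
def CutGraph (E : Finset (V × V)) (C : Finset V) : Finset (V × V) :=
  E.filter fun e => e.2 ∉ C

/-- `ι` is a product distribution: it factorizes into its single-node marginals,
i.e. the initial nodes are mutually independent under `ι`. -/
def IsProductDist {U : Finset V} (ι : Asg U → ℝ) : Prop :=
  ∀ b : Asg U,
    ι b = ∏ x : {x // x ∈ U}, ∑ b' : Asg U, if b' x = b x then ι b' else 0

/-! Markov chain notions -/

/-- Reachability in the underlying graph of a DTMC. -/
def MCReach {α : Type} (P : α → α → ℝ) (x y : α) : Prop :=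
  Relation.ReflTransGen (fun a b => 0 < P a b) x y

/-- Bottom strongly connected component of a DTMC: nonempty, closed under
reachability, and strongly connected. -/
def IsBSCC {α : Type} (P : α → α → ℝ) (D : Set α) : Prop :=
  D.Nonempty ∧ (∀ x ∈ D, ∀ y, MCReach P x y → y ∈ D) ∧
    ∀ x ∈ D, ∀ y ∈ D, MCReach P x y

/-- Walks of a given length along positive-probability transitions. -/
def walkLen {α : Type} (P : α → α → ℝ) : ℕ → α → α → Prop
  | 0, x, y => x = y
  | n + 1, x, y => ∃ z, 0 < P x z ∧ walkLen P n z y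

/-- The lengths of the cycles of `D`. -/
def CycleLens {α : Type} (P : α → α → ℝ) (D : Set α) : Set ℕ :=
  { n | 0 < n ∧ ∃ x ∈ D, walkLen P n x x }

/-- `D` is aperiodic: the gcd of the lengths of its cycles equals 1. -/
def AperiodicBSCC {α : Type} (P : α → α → ℝ) (D : Set α) : Prop :=
  ∀ d : ℕ, (∀ n ∈ CycleLens P D, d ∣ n) → d = 1

/-- `D` is periodic: the gcd of the lengths of its cycles is greater than 1. -/
def PeriodicBSCC {α : Type} (P : α → α → ℝ) (D : Set α) : Prop :=
  ∃ d : ℕ, 1 < d ∧ ∀ n ∈ CycleLens P D, d ∣ n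

/-- A GBN is smooth if all CPT entries and all values of `ι` lie in `(0,1)`. -/
def Smooth (B : GBN V) : Prop :=
  (∀ X b, B.cpt X b ∈ Set.Ioo (0 : ℝ) 1) ∧ ∀ d, B.ι d ∈ Set.Ioo (0 : ℝ) 1

/-!
The iterates `γ_{i+1} = Next(B, C, γ_i)|_C` are the transient distributions `γ₀ Pⁱ` of the cutset
chain, because `Next` is linear in the cutset distribution; so the two Cesàro averages coincide and
it suffices that one of them converges.

The cutset matrix `P` is substochastic. Its row sums are total masses of the dissected network, and
the non-initial non-cutset nodes can be summed out one sink at a time, since the cutset breaks every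
cycle; what remains is at most `∑ ι = 1`.

The Cesàro averages of the powers of a substochastic matrix converge: they stay in the compact
convex set of substochastic matrices, every cluster point `Q` satisfies `Q P = Q = P Q`, and two
cluster points `Q, Q'` then satisfy `Q = Q Q' = Q'`.
-/

end GBNPaper

open Topology

theorem MapClusterPt.eq_of_tendsto {X ι : Type*} [TopologicalSpace X] [T2Space X]
    {F : Filter ι} {u : ι → X} {x y : X} (hx : MapClusterPt x F u) (hu : Tendsto u F (𝓝 y)) :
    x = y :=
  eq_of_nhds_neBot (hx.clusterPt.mono hu)

section PowAvg

variable {A : Type*} [Ring A] [Algebra ℝ A]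

def powAvg (p : A) (n : ℕ) : A :=
  ((n : ℝ) + 1)⁻¹ • ∑ k ∈ Finset.range (n + 1), p ^ k

theorem powAvg_mul_sub_one (p : A) (n : ℕ) :
    powAvg p n * (p - 1) = ((n : ℝ) + 1)⁻¹ • (p ^ (n + 1) - 1) := by
  rw [powAvg, smul_mul_assoc, geom_sum_mul]

theorem sub_one_mul_powAvg (p : A) (n : ℕ) :
    (p - 1) * powAvg p n = ((n : ℝ) + 1)⁻¹ • (p ^ (n + 1) - 1) := by
  rw [powAvg, mul_smul_comm, mul_geom_sum]

theorem mul_powAvg_of_mul_eq {p x : A} (hx : x * p = x) (n : ℕ) : x * powAvg p n = x := by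
  have hpow : ∀ k, x * p ^ k = x := fun k => by
    induction k with
    | zero => rw [pow_zero, mul_one]
    | succ k ih => rw [pow_succ, ← mul_assoc, ih, hx]
  rw [powAvg, mul_smul_comm, Finset.mul_sum, Finset.sum_congr rfl fun k _ => hpow k,
    Finset.sum_const, Finset.card_range, ← Nat.cast_smul_eq_nsmul ℝ, smul_smul]
  push_cast
  rw [inv_mul_cancel₀ (by positivity), one_smul]

theorem powAvg_mul_of_mul_eq {p y : A} (hy : p * y = y) (n : ℕ) : powAvg p n * y = y := by
  have hpow : ∀ k, p ^ k * y = y := fun k => by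
    induction k with
    | zero => rw [pow_zero, one_mul]
    | succ k ih => rw [pow_succ', mul_assoc, ih, hy]
  rw [powAvg, smul_mul_assoc, Finset.sum_mul, Finset.sum_congr rfl fun k _ => hpow k,
    Finset.sum_const, Finset.card_range, ← Nat.cast_smul_eq_nsmul ℝ, smul_smul]
  push_cast
  rw [inv_mul_cancel₀ (by positivity), one_smul]

variable [TopologicalSpace A] [IsTopologicalRing A] [ContinuousSMul ℝ A]

theorem tendsto_powAvg_mul_sub_one {p : A} {K : Set A} (hK : IsCompact K)
    (hpK : ∀ n, p ^ n ∈ K) :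
    Tendsto (fun n => powAvg p n * (p - 1)) atTop (𝓝 0) := by
  have hε : Tendsto (fun n : ℕ => ((n : ℝ) + 1)⁻¹) atTop (𝓝 0) := by
    simpa only [one_div] using tendsto_one_div_add_atTop_nhds_zero_nat (𝕜 := ℝ)
  have hbdd := (hK.image (continuous_sub_right (1 : A))).isVonNBounded ℝ
  simp_rw [powAvg_mul_sub_one]
  exact hbdd.smul_tendsto_zero (Eventually.of_forall fun n => ⟨_, hpK (n + 1), rfl⟩) hε

variable [T2Space A]

theorem mul_eq_self_of_mapClusterPt_powAvg {p x : A} {K : Set A} (hK : IsCompact K)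
    (hpK : ∀ n, p ^ n ∈ K) (hx : MapClusterPt x atTop (powAvg p)) :
    x * p = x ∧ p * x = x := by
  have hright : x * (p - 1) = 0 :=
    (hx.continuousAt_comp (continuous_mul_const (p - 1)).continuousAt).eq_of_tendsto
      (tendsto_powAvg_mul_sub_one hK hpK)
  have hleft : (p - 1) * x = 0 := by
    refine (hx.continuousAt_comp (continuous_const_mul (p - 1)).continuousAt).eq_of_tendsto ?_
    refine (tendsto_powAvg_mul_sub_one hK hpK).congr fun n => ?_
    simp only [Function.comp, powAvg_mul_sub_one, sub_one_mul_powAvg]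
  constructor
  · rwa [mul_sub_one, sub_eq_zero] at hright
  · rwa [sub_one_mul, sub_eq_zero] at hleft

theorem exists_tendsto_powAvg {p : A} {K : Set A} (hK : IsCompact K) (hKc : Convex ℝ K)
    (hpK : ∀ n, p ^ n ∈ K) : ∃ q, Tendsto (powAvg p) atTop (𝓝 q) := by
  have hmem : ∀ n, powAvg p n ∈ K := fun n => by
    rw [powAvg, Finset.smul_sum]
    refine hKc.sum_mem (fun _ _ => by positivity) ?_ fun k _ => hpK k
    rw [Finset.sum_const, Finset.card_range, nsmul_eq_mul]
    push_cast
    exact mul_inv_cancel₀ (by positivity)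
  obtain ⟨q, -, hq⟩ := hK.exists_mapClusterPt (f := atTop) (u := powAvg p)
    (tendsto_principal.mpr (Eventually.of_forall hmem))
  refine ⟨q, hK.tendsto_nhds_of_unique_mapClusterPt (Eventually.of_forall hmem) fun x _ hx => ?_⟩
  have hxq : x * q = x :=
    (hq.continuousAt_comp (continuous_const_mul x).continuousAt).eq_of_tendsto
      (tendsto_const_nhds.congr fun n =>
        (mul_powAvg_of_mul_eq (mul_eq_self_of_mapClusterPt_powAvg hK hpK hx).1 n).symm)
  have hxq' : x * q = q :=
    (hx.continuousAt_comp (continuous_mul_const q).continuousAt).eq_of_tendsto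
      (tendsto_const_nhds.congr fun n =>
        (powAvg_mul_of_mul_eq (mul_eq_self_of_mapClusterPt_powAvg hK hpK hq).2 n).symm)
  rw [← hxq, hxq']

end PowAvg

namespace Matrix

variable {n : Type*} [Fintype n] [DecidableEq n]

def rowSubstochastic (R n : Type*) [Fintype n] [DecidableEq n] [Semiring R] [PartialOrder R]
    [IsOrderedRing R] : Submonoid (Matrix n n R) where
  carrier := {M | (∀ i j, 0 ≤ M i j) ∧ ∀ i, ∑ j, M i j ≤ 1}
  mul_mem' {M N} hM hN := by
    refine ⟨fun i j => Finset.sum_nonneg fun k _ => mul_nonneg (hM.1 i k) (hN.1 k j), fun i => ?_⟩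
    calc ∑ j, (M * N) i j = ∑ k, M i k * ∑ j, N k j := by
          simp only [mul_apply, Finset.mul_sum]; exact Finset.sum_comm
      _ ≤ ∑ k, M i k := Finset.sum_le_sum fun k _ =>
          mul_le_of_le_one_right (hM.1 i k) (hN.2 k)
      _ ≤ 1 := hM.2 i
  one_mem' :=
    ⟨fun i j => by by_cases h : i = j <;> simp [one_apply, h], fun i => by simp [one_apply]⟩

variable {R : Type*} [Semiring R] [PartialOrder R] [IsOrderedRing R]

theorem mem_rowSubstochastic {M : Matrix n n R} :
    M ∈ rowSubstochastic R n ↔ (∀ i j, 0 ≤ M i j) ∧ ∀ i, ∑ j, M i j ≤ 1 :=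
  Iff.rfl

theorem convex_rowSubstochastic : Convex R (rowSubstochastic R n : Set (Matrix n n R)) := by
  intro x hx y hy a b ha hb h
  simp only [SetLike.mem_coe, mem_rowSubstochastic] at hx hy ⊢
  refine ⟨fun i j => ?_, fun i => ?_⟩
  · simp only [add_apply, smul_apply, smul_eq_mul]
    exact add_nonneg (mul_nonneg ha (hx.1 i j)) (mul_nonneg hb (hy.1 i j))
  · simp only [add_apply, smul_apply, smul_eq_mul, Finset.sum_add_distrib, ← Finset.mul_sum]
    calc a * ∑ j, x i j + b * ∑ j, y i j ≤ a * 1 + b * 1 := by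
          gcongr
          exacts [hx.2 i, hy.2 i]
      _ = 1 := by rw [mul_one, mul_one, h]

theorem isCompact_rowSubstochastic : IsCompact (rowSubstochastic ℝ n : Set (Matrix n n ℝ)) := by
  have hbox : IsCompact (Set.univ.pi fun _ : n => Set.univ.pi fun _ : n => Set.Icc (0 : ℝ) 1) :=
    isCompact_univ_pi fun _ => isCompact_univ_pi fun _ => isCompact_Icc
  refine hbox.of_isClosed_subset ?_ fun M hM => ?_
  · show IsClosed {M : Matrix n n ℝ | (∀ i j, 0 ≤ M i j) ∧ ∀ i, ∑ j, M i j ≤ 1}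
    simp only [Set.ofPred_and, Set.ofPred_forall]
    refine (isClosed_iInter fun i => isClosed_iInter fun j => isClosed_le continuous_const ?_).inter
      (isClosed_iInter fun i => isClosed_le ?_ continuous_const)
    · fun_prop
    · fun_prop
  · simp only [Set.mem_univ_pi, Set.mem_Icc]
    exact fun i j => ⟨hM.1 i j,
      (Finset.single_le_sum (fun k _ => hM.1 i k) (Finset.mem_univ j)).trans (hM.2 i)⟩

end Matrix

section BoolAssignments

open Function Relation

theorem Finset.exists_forall_not_rel_of_irrefl_transGen {ι : Type*} [Finite ι]
    {r : ι → ι → Prop} (hr : ∀ x, ¬ TransGen r x x) {S : Finset ι} (hS : S.Nonempty) :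
    ∃ X ∈ S, ∀ Y ∈ S, ¬ r X Y := by
  let s : ι → ι → Prop := fun a b => TransGen r b a
  have : IsTrans ι s := ⟨fun _ _ _ h₁ h₂ => h₂.trans h₁⟩
  have : Std.Irrefl s := ⟨hr⟩
  obtain ⟨X, hX, hmin⟩ := (Finite.wellFounded_of_trans_of_irrefl s).has_min (S : Set ι) hS
  exact ⟨X, hX, fun Y hY hXY => hmin Y hY (TransGen.single hXY)⟩

variable {ι : Type*} [DecidableEq ι]

theorem restrict_piEquivPiSubtypeProd_symm (U : Finset ι) (c : U → Bool)
    (e : {x // x ∉ U} → Bool) :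
    (fun x : U => (Equiv.piEquivPiSubtypeProd (· ∈ U) fun _ => Bool).symm (c, e) x) = c :=
  funext fun x => dif_pos x.2

variable [Fintype ι]

theorem sum_mul_eq_half_sum (X : ι) {H : (ι → Bool) → ℝ} (hH : ∀ b v, H (update b X v) = H b)
    {g : Bool → (ι → Bool) → ℝ} (hg : ∀ v b w, g v (update b X w) = g v b)
    (hsum : ∀ b, g true b + g false b = 1) :
    ∑ b, H b * g (b X) b = (∑ b, H b) / 2 := by
  have hflip : Involutive fun b : ι → Bool => update b X (!b X) := fun b => by
    simp only [update_self, Bool.not_not, update_idem, update_eq_self]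
  have hswap : ∑ b, H b * g (b X) b = ∑ b, H b * g (!b X) b := by
    rw [← Equiv.sum_comp (hflip.toPerm _)]
    refine Finset.sum_congr rfl fun b _ => ?_
    simp only [Involutive.coe_toPerm, hH, update_self, hg]
  have hpair : ∀ b, g (b X) b + g (!b X) b = 1 := fun b => by
    cases b X
    · rw [Bool.not_false, add_comm, hsum]
    · rw [Bool.not_true, hsum]
  have htotal : ∑ b, H b * g (b X) b + ∑ b, H b * g (!b X) b = ∑ b, H b := by
    rw [← Finset.sum_add_distrib]
    exact Finset.sum_congr rfl fun b _ => by rw [← mul_add, hpair, mul_one]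
  linarith

/-- Normalisation of the chain rule of an acyclic network: the nodes of `T` are summed out one sink
at a time. -/
theorem sum_mul_prod_eq_div_two_pow {r : ι → ι → Prop} (hr : ∀ x, ¬ TransGen r x x)
    {f : ι → Bool → (ι → Bool) → ℝ} (hf : ∀ X b, f X true b + f X false b = 1)
    (T : Finset ι) (hdep : ∀ X ∈ T, ∀ Y ∈ T, ¬ r Y X → ∀ v b w, f X v (update b Y w) = f X v b)
    {H : (ι → Bool) → ℝ} (hH : ∀ X ∈ T, ∀ b v, H (update b X v) = H b) :
    ∑ b, H b * ∏ X ∈ T, f X (b X) b = (∑ b, H b) / 2 ^ T.card := by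
  induction T using Finset.strongInduction generalizing H with
  | H T ih =>
  rcases T.eq_empty_or_nonempty with rfl | hT
  · simp
  obtain ⟨X, hXT, hsink⟩ := Finset.exists_forall_not_rel_of_irrefl_transGen hr hT
  set H' : (ι → Bool) → ℝ := fun b => H b * ∏ Y ∈ T.erase X, f Y (b Y) b
  have hH' : ∀ b v, H' (update b X v) = H' b := fun b v => by
    refine congrArg₂ _ (hH X hXT b v) (Finset.prod_congr rfl fun Y hY => ?_)
    have hYT := Finset.mem_of_mem_erase hY
    rw [update_of_ne (Finset.ne_of_mem_erase hY), hdep Y hYT X hXT (hsink Y hYT)]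
  calc ∑ b, H b * ∏ Y ∈ T, f Y (b Y) b = ∑ b, H' b * f X (b X) b := by
        refine Finset.sum_congr rfl fun b _ => ?_
        rw [← Finset.mul_prod_erase T _ hXT]
        ring
    _ = (∑ b, H' b) / 2 :=
        sum_mul_eq_half_sum X hH' (hdep X hXT X hXT fun h => hr X (TransGen.single h)) (hf X)
    _ = (∑ b, H b) / 2 ^ (T.erase X).card / 2 := by
        rw [ih _ (Finset.erase_ssubset hXT)
          (fun Y hY Z hZ => hdep Y (Finset.mem_of_mem_erase hY) Z (Finset.mem_of_mem_erase hZ))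
          (fun Y hY => hH Y (Finset.mem_of_mem_erase hY))]
    _ = (∑ b, H b) / 2 ^ T.card := by
        rw [div_div, ← pow_succ, Finset.card_erase_add_one hXT]

theorem sum_comp_restrict (U : Finset ι) (φ : (U → Bool) → ℝ) :
    ∑ b : ι → Bool, φ (fun x => b x) = 2 ^ Uᶜ.card * ∑ d, φ d := by
  rw [← (Equiv.piEquivPiSubtypeProd (· ∈ U) fun _ => Bool).symm.sum_comp,
    Fintype.sum_prod_type_right]
  simp only [restrict_piEquivPiSubtypeProd_symm, Finset.sum_const, Finset.card_univ,
    Fintype.card_fun, Fintype.card_bool, nsmul_eq_mul]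
  rw [Fintype.card_subtype_compl, Fintype.card_coe, ← Finset.card_compl]
  push_cast
  rfl

theorem sum_ite_eqOn_compl (U : Finset ι) (b : ι → Bool) (g : (U → Bool) → ℝ) :
    ∑ a : ι → Bool, (if ∀ x, x ∉ U → b x = a x then g (fun y => a y) else 0) = ∑ d, g d := by
  rw [← (Equiv.piEquivPiSubtypeProd (· ∈ U) fun _ => Bool).symm.sum_comp, Fintype.sum_prod_type]
  refine Finset.sum_congr rfl fun c _ => ?_
  have hcompl : ∀ e, (∀ x, x ∉ U →
      b x = (Equiv.piEquivPiSubtypeProd (· ∈ U) fun _ => Bool).symm (c, e) x) ↔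
        (fun x : {x // x ∉ U} => b x) = e := fun e => by
    simp only [funext_iff, Subtype.forall]
    exact forall₂_congr fun x hx => by rw [Equiv.piEquivPiSubtypeProd_symm_apply, dif_neg hx]
  simp only [hcompl, restrict_piEquivPiSubtypeProd_symm]
  rw [Finset.sum_ite_eq]
  simp

end BoolAssignments

namespace GBNPaper

open Function

open scoped Matrix

theorem vecMul_eq_matrix_vecMul {α : Type} [Fintype α] (γ : α → ℝ) (P : α → α → ℝ) :
    vecMul γ P = γ ᵥ* Matrix.of P :=
  rfl

theorem matIter_eq_vecMul_pow {α : Type} [Fintype α] [DecidableEq α] (P : α → α → ℝ)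
    (γ0 : α → ℝ) (n : ℕ) : matIter P γ0 n = γ0 ᵥ* Matrix.of P ^ n := by
  induction n with
  | zero => rw [matIter, pow_zero, Matrix.vecMul_one]
  | succ n ih => rw [matIter, ih, vecMul_eq_matrix_vecMul, Matrix.vecMul_vecMul, pow_succ]

theorem cesaro_matIter {α : Type} [Fintype α] [DecidableEq α] (P : α → α → ℝ) (γ0 : α → ℝ)
    (n : ℕ) : cesaro (matIter P γ0) n = γ0 ᵥ* powAvg (Matrix.of P) n := by
  funext a
  simp only [cesaro, matIter_eq_vecMul_pow, powAvg, Matrix.vecMul_smul, Matrix.vecMul_sum,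
    Pi.smul_apply, Finset.sum_apply, smul_eq_mul]
  rw [div_eq_inv_mul]

theorem exists_tendsto_cesaro_matIter {α : Type} [Fintype α] [DecidableEq α] {P : α → α → ℝ}
    (hP : Matrix.of P ∈ Matrix.rowSubstochastic ℝ α) (γ0 : α → ℝ) :
    ∃ γ, Tendsto (cesaro (matIter P γ0)) atTop (𝓝 γ) := by
  obtain ⟨Q, hQ⟩ := exists_tendsto_powAvg Matrix.isCompact_rowSubstochastic
    Matrix.convex_rowSubstochastic fun n => pow_mem hP n
  refine ⟨γ0 ᵥ* Q, ?_⟩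
  rw [funext (cesaro_matIter P γ0)]
  exact ((continuous_const.matrix_vecMul continuous_id).tendsto Q).comp hQ

theorem mem_Pre {V : Type} [DecidableEq V] {E : Finset (V × V)} {X Y : V} :
    X ∈ Pre E Y ↔ (X, Y) ∈ E := by
  simp [Pre]

theorem IsCutset.not_transGen_into_compl {V : Type} {E : Finset (V × V)} {C : Finset V}
    (hC : IsCutset E C) (x : V) : ¬ Relation.TransGen (fun a b => (a, b) ∈ E ∧ b ∉ C) x x := by
  intro hx
  have hlift : ∀ {a}, Relation.TransGen (fun a b => (a, b) ∈ E ∧ b ∉ C) a x → a ∉ C →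
      Relation.TransGen (fun a b => (a, b) ∈ E ∧ a ∉ C ∧ b ∉ C) a x := by
    intro a h
    induction h using Relation.TransGen.head_induction_on with
    | single hab => exact fun ha => .single ⟨hab.1, ha, hab.2⟩
    | head hac _ ih => exact fun ha => .head ⟨hac.1, ha, hac.2⟩ (ih hac.2)
  obtain ⟨_, -, hlast⟩ := Relation.TransGen.tail'_iff.mp hx
  exact hC x (hlift hx hlast.2)

variable {V : Type} [Fintype V] [DecidableEq V]

theorem sum_marginal (μ : (V → Bool) → ℝ) (U : Finset V) : ∑ d, marginal μ U d = ∑ b, μ b := by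
  unfold marginal probIf
  rw [Finset.sum_comm]
  refine Finset.sum_congr rfl fun b _ => ?_
  simp only [Agrees, ← funext_iff]
  rw [Finset.sum_ite_eq]
  simp

theorem sum_Next (B : GBN V) (C : Finset V) (γ : Asg C → ℝ) :
    ∑ a, Next B C γ a = ∑ b, Extend B C γ b := by
  unfold Next Extend
  rw [Finset.sum_comm]
  exact Finset.sum_congr rfl fun b _ => sum_ite_eqOn_compl C b _

theorem distDissect_eq_sum_dirac (B : GBN V) (C : Finset V) (γ : Asg C → ℝ) (b : V → Bool)
    (c : Asg C) : distDissect B C γ b c = ∑ d, γ d * distDissect B C (DiracD d) b c := by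
  simp only [distDissect, DiracD, mul_ite, ite_mul, mul_one, mul_zero, zero_mul]
  rw [Finset.sum_ite_eq]
  simp only [Finset.mem_univ, ↓reduceIte]
  ring

theorem marginal_Next (B : GBN V) (C : Finset V) (γ : Asg C → ℝ) :
    marginal (Next B C γ) C = vecMul γ (cutsetP B C) := by
  funext c
  simp only [vecMul, cutsetP, marginal, probIf, Next, Finset.mul_sum, mul_ite, mul_zero]
  rw [Finset.sum_comm]
  refine Finset.sum_congr rfl fun a _ => ?_
  split_ifs
  · rw [Finset.sum_comm]
    refine Finset.sum_congr rfl fun b _ => ?_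
    split_ifs
    · exact distDissect_eq_sum_dirac B C γ b _
    · simp
  · simp

theorem copyProb_nonneg (B : GBN V) (X : V) (v : Bool) (b : V → Bool) :
    0 ≤ copyProb B X v b := by
  unfold copyProb
  split
  · exact B.cpt_nonneg _ _
  · linarith [B.cpt_le_one X fun p => b p.1]

theorem copyProb_true_add_false (B : GBN V) (X : V) (b : V → Bool) :
    copyProb B X true b + copyProb B X false b = 1 := by
  simp [copyProb]

theorem copyProb_update_of_not_mem {B : GBN V} {X Y : V} (h : (Y, X) ∉ B.edges) (v : Bool)
    (b : V → Bool) (w : Bool) : copyProb B X v (update b Y w) = copyProb B X v b := by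
  have hparents : (fun p : Pre B.edges X => update b Y w p.1) = fun p => b p.1 :=
    funext fun p => update_of_ne (fun hp => h (by rw [← hp]; exact mem_Pre.mp p.2)) _ _
  simp only [copyProb, hparents]

theorem sum_prod_copyProb (B : GBN V) (C : Finset V) (b : V → Bool) :
    ∑ c : Asg C, ∏ Y ∈ C.attach, copyProb B Y.1 (c Y) b = 1 := by
  rw [← Finset.univ_eq_attach,
    ← Fintype.prod_sum fun (Y : {x // x ∈ C}) (v : Bool) => copyProb B Y.1 v b]
  simp [copyProb_true_add_false]

theorem Extend_eq (B : GBN V) (C : Finset V) (γ : Asg C → ℝ) (b : V → Bool) :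
    Extend B C γ b = B.ι (fun x => b x.1) * γ (fun x => b x.1) *
      ∏ X ∈ (Finset.univ \ InitSet B.edges) \ C, copyProb B X (b X) b := by
  unfold Extend distDissect
  rw [← Finset.mul_sum, sum_prod_copyProb, mul_one]

theorem distDissect_nonneg (B : GBN V) (C : Finset V) {γ : Asg C → ℝ} (hγ : ∀ d, 0 ≤ γ d)
    (b : V → Bool) (c : Asg C) : 0 ≤ distDissect B C γ b c := by
  unfold distDissect
  have := B.ι_dist.1 fun x => b x.1
  have := hγ fun x => b x.1
  have := Finset.prod_nonneg fun X (_ : X ∈ (Finset.univ \ InitSet B.edges) \ C) =>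
    copyProb_nonneg B X (b X) b
  have := Finset.prod_nonneg fun (Y : C) (_ : Y ∈ C.attach) => copyProb_nonneg B Y.1 (c Y) b
  positivity

theorem DiracD_nonneg {α : Type} [DecidableEq α] (b c : α) : 0 ≤ DiracD b c := by
  unfold DiracD
  split_ifs <;> norm_num

theorem cutsetP_nonneg (B : GBN V) (C : Finset V) (b c : Asg C) : 0 ≤ cutsetP B C b c := by
  unfold cutsetP marginal probIf Next
  refine Finset.sum_nonneg fun a _ => ?_
  split_ifs
  · refine Finset.sum_nonneg fun b' _ => ?_
    split_ifs
    · exact distDissect_nonneg B C (DiracD_nonneg b) _ _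
    · exact le_rfl
  · exact le_rfl

def clampedCPT (B : GBN V) (C : Finset V) (b0 : Asg C) (X : V) (v : Bool) (b : V → Bool) : ℝ :=
  if h : X ∈ C then DiracD (b0 ⟨X, h⟩) v else copyProb B X v b

theorem clampedCPT_nonneg (B : GBN V) (C : Finset V) (b0 : Asg C) (X : V) (v : Bool)
    (b : V → Bool) : 0 ≤ clampedCPT B C b0 X v b := by
  unfold clampedCPT
  split_ifs
  exacts [DiracD_nonneg _ _, copyProb_nonneg B X v b]

theorem clampedCPT_true_add_false (B : GBN V) (C : Finset V) (b0 : Asg C) (X : V)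
    (b : V → Bool) : clampedCPT B C b0 X true b + clampedCPT B C b0 X false b = 1 := by
  unfold clampedCPT
  split_ifs with h
  · cases b0 ⟨X, h⟩ <;> simp [DiracD]
  · exact copyProb_true_add_false B X b

theorem clampedCPT_update {B : GBN V} {C : Finset V} (b0 : Asg C) {X Y : V}
    (h : ¬ ((Y, X) ∈ B.edges ∧ X ∉ C)) (v : Bool) (b : V → Bool) (w : Bool) :
    clampedCPT B C b0 X v (update b Y w) = clampedCPT B C b0 X v b := by
  unfold clampedCPT
  split_ifs with hX
  · rfl
  · exact copyProb_update_of_not_mem (fun hE => h ⟨hE, hX⟩) v b w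

theorem Extend_dirac_le (B : GBN V) (C : Finset V) (b0 : Asg C) (b : V → Bool) :
    Extend B C (DiracD b0) b ≤
      B.ι (fun x => b x.1) * ∏ X ∈ (InitSet B.edges)ᶜ, clampedCPT B C b0 X (b X) b := by
  have hclamped : DiracD b0 (fun x => b x.1) ≤
      ∏ X ∈ (InitSet B.edges)ᶜ with X ∈ C, clampedCPT B C b0 X (b X) b := by
    unfold DiracD
    -- not an equality: the clamping of cutset nodes that are also initial is dropped
    split_ifs with hb
    · refine (Finset.prod_eq_one fun X hX => ?_).ge
      have hXC := (Finset.mem_filter.mp hX).2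
      simp [clampedCPT, hXC, DiracD, ← hb]
    · exact Finset.prod_nonneg fun X _ => clampedCPT_nonneg B C b0 X _ b
  have hfree : ∏ X ∈ (InitSet B.edges)ᶜ with X ∉ C, clampedCPT B C b0 X (b X) b =
      ∏ X ∈ (Finset.univ \ InitSet B.edges) \ C, copyProb B X (b X) b := by
    rw [← Finset.compl_eq_univ_sdiff, Finset.sdiff_eq_filter]
    exact Finset.prod_congr rfl fun X hX => dif_neg (Finset.mem_filter.mp hX).2
  rw [Extend_eq, ← Finset.prod_filter_mul_prod_filter_not (InitSet B.edges)ᶜ (· ∈ C), hfree,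
    mul_assoc]
  exact mul_le_mul_of_nonneg_left
    (mul_le_mul_of_nonneg_right hclamped (Finset.prod_nonneg fun X _ => copyProb_nonneg B X _ b))
    (B.ι_dist.1 _)

theorem sum_Extend_dirac_le_one (B : GBN V) {C : Finset V} (hC : IsCutset B.edges C)
    (b0 : Asg C) : ∑ b, Extend B C (DiracD b0) b ≤ 1 := by
  have hinit : ∀ X ∈ (InitSet B.edges)ᶜ, ∀ (b : V → Bool) (v : Bool),
      B.ι (fun x => update b X v x.1) = B.ι fun x => b x.1 := fun X hX b v => by
    congr 1
    funext x
    exact update_of_ne (fun (h : x.1 = X) => Finset.mem_compl.mp hX (h ▸ x.2)) _ _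
  calc ∑ b, Extend B C (DiracD b0) b
      ≤ ∑ b, B.ι (fun x => b x.1) * ∏ X ∈ (InitSet B.edges)ᶜ, clampedCPT B C b0 X (b X) b :=
        Finset.sum_le_sum fun b _ => Extend_dirac_le B C b0 b
    _ = (∑ b : V → Bool, B.ι fun x => b x.1) / 2 ^ (InitSet B.edges)ᶜ.card :=
        sum_mul_prod_eq_div_two_pow hC.not_transGen_into_compl
          (clampedCPT_true_add_false B C b0) _ (fun _ _ _ _ h => clampedCPT_update b0 h) hinit
    _ = 1 := by
        rw [sum_comp_restrict, B.ι_dist.2, mul_one, div_self (by positivity)]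

theorem cutsetP_mem_rowSubstochastic (B : GBN V) {C : Finset V} (hC : IsCutset B.edges C) :
    Matrix.of (cutsetP B C) ∈ Matrix.rowSubstochastic ℝ (Asg C) := by
  refine ⟨cutsetP_nonneg B C, fun b0 => ?_⟩
  simp only [Matrix.of_apply, cutsetP]
  rw [sum_marginal, sum_Next]
  exact sum_Extend_dirac_le_one B hC b0

theorem nextSeq_eq_matIter (B : GBN V) (C : Finset V) (γ0 : Asg C → ℝ) :
    nextSeq B C γ0 = matIter (cutsetP B C) γ0 := by
  funext n
  induction n with
  | zero => rfl
  | succ n ih => rw [nextSeq, matIter, marginal_Next, ih]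

theorem stmt5_general {V : Type} [Fintype V] [DecidableEq V]
    (B : GBN V) (C : Finset V) (hC : IsCutset B.edges C)
    (γ0 : Asg C → ℝ) :
    ∃ γl γa : Asg C → ℝ,
      Tendsto (cesaro (matIter (cutsetP B C) γ0)) atTop (nhds γl) ∧
      Tendsto (cesaro (nextSeq B C γ0)) atTop (nhds γa) ∧
      Extend B C γl = Extend B C γa := by
  obtain ⟨γ, hγ⟩ := exists_tendsto_cesaro_matIter (cutsetP_mem_rowSubstochastic B hC) γ0
  exact ⟨γ, γ, hγ, nextSeq_eq_matIter B C γ0 ▸ hγ, rfl⟩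

/-- For any cutset `C` and any initial cutset distribution `γ0`,
the Markov chain semantics and the limit average semantics agree:
`MCS(B,C,γ0) = LimAvg(B,C,γ0)`; in particular both Cesàro limits exist, so
`LimAvg(B,C,γ0)` is defined for every `γ0`. -/
theorem stmt5 {V : Type} [Fintype V] [DecidableEq V]
    (B : GBN V) (C : Finset V) (hC : IsCutset B.edges C)
    (γ0 : Asg C → ℝ) (h0 : IsDist γ0) :
    ∃ γl γa : Asg C → ℝ,
      Tendsto (cesaro (matIter (cutsetP B C) γ0)) atTop (nhds γl) ∧
      Tendsto (cesaro (nextSeq B C γ0)) atTop (nhds γa) ∧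
      Extend B C γl = Extend B C γa :=
  stmt5_general B C hC γ0

end GBNPaper
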